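/- For the scalar ODE ẋ = −κ₁|x|^{γ₁} sgn(x) − κ₂|x|^{γ₂} sgn(x) with κ₁, κ₂ > 0, 0 < γ₁ < 1 < γ₂, the settling time satisfies, for all initial states x₀, T(x₀) ≤ 1/(κ₁(1−γ₁)) + 1/(κ₂(γ₂−1)); in particular the origin is fixed-time stable. -/

import Mathlib

/-!
While `x > 0`, the law gives both `x' ≤ -κ₂ x^γ₂` and `x' ≤ -κ₁ x^γ₁`. Under `x' ≤ -κ x^γ` the
quantity `x^(1-γ) + κ (1-γ) t` has derivative `(1-γ) x^(-γ) (x' + κ x^γ)`, so it is monotone for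
`γ ≥ 1` and antitone for `γ ≤ 1`. With `γ = γ₂` this forces `x < 1` by time `1 / (κ₂ (γ₂ - 1))`,
whatever `x 0` is; with `γ = γ₁`, a solution below `1` cannot stay positive for another
`1 / (κ₁ (1 - γ₁))`. Negative initial states reduce to positive ones because `spow` is odd.
-/

/-- Signed power `|y|^γ sgn(y)` appearing in the attracting laws. -/
noncomputable def spow (y γ : ℝ) : ℝ := |y| ^ γ * Real.sign y

open Set

lemma spow_neg (y γ : ℝ) : spow (-y) γ = -spow y γ := by
  unfold spow; rw [abs_neg, Real.sign_neg]; ring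

lemma spow_of_pos {y : ℝ} (hy : 0 < y) (γ : ℝ) : spow y γ = y ^ γ := by
  unfold spow; rw [abs_of_pos hy, Real.sign_of_pos hy, mul_one]

lemma pos_of_continuousOn_Icc_of_ne_zero {f : ℝ → ℝ} {a b : ℝ} (hf : ContinuousOn f (Icc a b))
    (ha : 0 < f a) (hne : ∀ t ∈ Icc a b, f t ≠ 0) : ∀ t ∈ Icc a b, 0 < f t := by
  intro t ht
  by_contra! hft
  obtain ⟨s, hs, hfs⟩ := intermediate_value_Icc' ht.1 (hf.mono (Icc_subset_Icc_right ht.2))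
    ⟨hft, ha.le⟩
  exact hne s ⟨hs.1, hs.2.trans ht.2⟩ hfs

section DecayComparison

variable {x x' : ℝ → ℝ} {κ γ a b : ℝ}

lemma hasDerivAt_rpow_one_sub_add_mul {t : ℝ} (hx : HasDerivAt x (x' t) t) (hpos : 0 < x t) :
    HasDerivAt (fun s ↦ x s ^ (1 - γ) + κ * (1 - γ) * s)
      ((1 - γ) * x t ^ (-γ) * (x' t + κ * x t ^ γ)) t := by
  have hcancel : x t ^ (-γ) * x t ^ γ = 1 := by
    rw [← Real.rpow_add hpos]; simp
  refine ((hx.rpow_const (Or.inl hpos.ne')).add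
    ((hasDerivAt_id t).const_mul (κ * (1 - γ)))).congr_deriv ?_
  rw [sub_sub_cancel_left]
  linear_combination -(1 - γ) * κ * hcancel

variable (hpos : ∀ t ∈ Icc a b, 0 < x t) (hderiv : ∀ t ∈ Icc a b, HasDerivAt x (x' t) t)
  (hle : ∀ t ∈ Icc a b, x' t ≤ -κ * x t ^ γ)
include hpos hderiv hle

lemma monotoneOn_rpow_one_sub_add_mul (hγ : 1 ≤ γ) :
    MonotoneOn (fun t ↦ x t ^ (1 - γ) + κ * (1 - γ) * t) (Icc a b) := by
  refine monotoneOn_of_hasDerivWithinAt_nonneg (convex_Icc a b)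
    (f' := fun t ↦ (1 - γ) * x t ^ (-γ) * (x' t + κ * x t ^ γ))
    (fun t ht ↦ (hasDerivAt_rpow_one_sub_add_mul (hderiv t ht) (hpos t ht)).continuousAt
      |>.continuousWithinAt) (fun t ht ↦ ?_) (fun t ht ↦ ?_)
  all_goals rw [interior_Icc] at ht; have ht' := Ioo_subset_Icc_self ht
  · exact (hasDerivAt_rpow_one_sub_add_mul (hderiv t ht') (hpos t ht')).hasDerivWithinAt
  · refine mul_nonneg_of_nonpos_of_nonpos ?_ (by linarith [hle t ht'])
    exact mul_nonpos_of_nonpos_of_nonneg (by linarith) (Real.rpow_nonneg (hpos t ht').le _)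

lemma antitoneOn_rpow_one_sub_add_mul (hγ : γ ≤ 1) :
    AntitoneOn (fun t ↦ x t ^ (1 - γ) + κ * (1 - γ) * t) (Icc a b) := by
  refine antitoneOn_of_hasDerivWithinAt_nonpos (convex_Icc a b)
    (f' := fun t ↦ (1 - γ) * x t ^ (-γ) * (x' t + κ * x t ^ γ))
    (fun t ht ↦ (hasDerivAt_rpow_one_sub_add_mul (hderiv t ht) (hpos t ht)).continuousAt
      |>.continuousWithinAt) (fun t ht ↦ ?_) (fun t ht ↦ ?_)
  all_goals rw [interior_Icc] at ht; have ht' := Ioo_subset_Icc_self ht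
  · exact (hasDerivAt_rpow_one_sub_add_mul (hderiv t ht') (hpos t ht')).hasDerivWithinAt
  · refine mul_nonpos_of_nonneg_of_nonpos ?_ (by linarith [hle t ht'])
    exact mul_nonneg (by linarith) (Real.rpow_nonneg (hpos t ht').le _)

lemma lt_one_of_superlinear_decay (hκ : 0 < κ) (hγ : 1 < γ) (hab : 1 ≤ κ * (γ - 1) * (b - a)) :
    x b < 1 := by
  have hba : a ≤ b := by nlinarith [mul_pos hκ (sub_pos.2 hγ)]
  have hmono :=
    monotoneOn_rpow_one_sub_add_mul hpos hderiv hle hγ.le ⟨le_rfl, hba⟩ ⟨hba, le_rfl⟩ hba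
  have hxa : 0 < x a ^ (1 - γ) := Real.rpow_pos_of_pos (hpos a ⟨le_rfl, hba⟩) _
  have hxb : 1 < x b ^ (1 - γ) := by simp only at hmono; nlinarith
  rcases (Real.one_lt_rpow_iff_of_pos (hpos b ⟨hba, le_rfl⟩)).1 hxb with ⟨_, h⟩ | ⟨h, _⟩
  · linarith
  · exact h

lemma one_lt_of_sublinear_decay (hκ : 0 < κ) (hγ : γ < 1) (hab : 1 ≤ κ * (1 - γ) * (b - a)) :
    1 < x a := by
  have hba : a ≤ b := by nlinarith [mul_pos hκ (sub_pos.2 hγ)]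
  have hanti :=
    antitoneOn_rpow_one_sub_add_mul hpos hderiv hle hγ.le ⟨le_rfl, hba⟩ ⟨hba, le_rfl⟩ hba
  have hxb : 0 < x b ^ (1 - γ) := Real.rpow_pos_of_pos (hpos b ⟨hba, le_rfl⟩) _
  have hxa : 1 < x a ^ (1 - γ) := by simp only at hanti; nlinarith
  rcases (Real.one_lt_rpow_iff_of_pos (hpos a ⟨le_rfl, hba⟩)).1 hxa with ⟨h, _⟩ | ⟨_, h⟩
  · exact h
  · linarith

end DecayComparison

theorem exists_zero_mem_Icc_of_pos {κ₁ κ₂ γ₁ γ₂ : ℝ} {x : ℝ → ℝ} (hκ₁ : 0 < κ₁) (hκ₂ : 0 < κ₂)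
    (hγ₁ : γ₁ < 1) (hγ₂ : 1 < γ₂)
    (hode : ∀ t, 0 ≤ t → HasDerivAt x (-κ₁ * spow (x t) γ₁ - κ₂ * spow (x t) γ₂) t)
    (hx0 : 0 < x 0) :
    ∃ t ∈ Icc 0 (1 / (κ₁ * (1 - γ₁)) + 1 / (κ₂ * (γ₂ - 1))), x t = 0 := by
  have hc₁ : 0 < κ₁ * (1 - γ₁) := mul_pos hκ₁ (by linarith)
  have hc₂ : 0 < κ₂ * (γ₂ - 1) := mul_pos hκ₂ (by linarith)
  set t₁ := 1 / (κ₂ * (γ₂ - 1))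
  set T := 1 / (κ₁ * (1 - γ₁)) + t₁
  have ht₁ : 0 ≤ t₁ := by positivity
  have ht₁T : t₁ ≤ T := le_add_of_nonneg_left (by positivity)
  by_contra! hne
  have hpos : ∀ t ∈ Icc 0 T, 0 < x t := pos_of_continuousOn_Icc_of_ne_zero
    (fun t ht ↦ (hode t ht.1).continuousAt.continuousWithinAt) hx0 hne
  have hderiv : ∀ t ∈ Icc 0 T, HasDerivAt x (-κ₁ * x t ^ γ₁ - κ₂ * x t ^ γ₂) t := fun t ht ↦ by
    simpa only [spow_of_pos (hpos t ht)] using hode t ht.1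
  have hfast : x t₁ < 1 := lt_one_of_superlinear_decay (a := 0)
    (fun t ht ↦ hpos t (Icc_subset_Icc_right ht₁T ht))
    (fun t ht ↦ hderiv t (Icc_subset_Icc_right ht₁T ht))
    (fun t ht ↦ by nlinarith [Real.rpow_nonneg (hpos t (Icc_subset_Icc_right ht₁T ht)).le γ₁])
    hκ₂ hγ₂ (by simp only [t₁, sub_zero, mul_one_div_cancel hc₂.ne', le_refl])
  have hslow : 1 < x t₁ := one_lt_of_sublinear_decay (b := T)
    (fun t ht ↦ hpos t (Icc_subset_Icc_left ht₁ ht))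
    (fun t ht ↦ hderiv t (Icc_subset_Icc_left ht₁ ht))
    (fun t ht ↦ by nlinarith [Real.rpow_nonneg (hpos t (Icc_subset_Icc_left ht₁ ht)).le γ₂])
    hκ₁ hγ₁ (by simp only [T, add_sub_cancel_right, mul_one_div_cancel hc₁.ne', le_refl])
  exact hfast.not_gt hslow

theorem stmt_9_general (κ₁ κ₂ γ₁ γ₂ : ℝ)
    (hκ₁ : 0 < κ₁) (hκ₂ : 0 < κ₂)
    (hγ₁1 : γ₁ < 1) (hγ₂ : 1 < γ₂)
    (x : ℝ → ℝ)
    (hode : ∀ t, 0 ≤ t →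
      HasDerivAt x (-κ₁ * spow (x t) γ₁ - κ₂ * spow (x t) γ₂) t) :
    (∃ t, 0 ≤ t ∧ x t = 0) ∧
    sInf {t : ℝ | 0 ≤ t ∧ x t = 0} ≤
      1 / (κ₁ * (1 - γ₁)) + 1 / (κ₂ * (γ₂ - 1)) := by
  have hneg_ode : ∀ t, 0 ≤ t →
      HasDerivAt (-x) (-κ₁ * spow ((-x) t) γ₁ - κ₂ * spow ((-x) t) γ₂) t := fun t ht ↦
    (hode t ht).neg.congr_deriv (by simp only [Pi.neg_apply, spow_neg]; ring)
  obtain ⟨t, ht, hxt⟩ : ∃ t ∈ Icc 0 (1 / (κ₁ * (1 - γ₁)) + 1 / (κ₂ * (γ₂ - 1))), x t = 0 := by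
    rcases lt_trichotomy (x 0) 0 with hx0 | hx0 | hx0
    · obtain ⟨t, ht, hxt⟩ := exists_zero_mem_Icc_of_pos hκ₁ hκ₂ hγ₁1 hγ₂ hneg_ode
        (neg_pos.2 hx0)
      exact ⟨t, ht, neg_eq_zero.1 hxt⟩
    · have : 0 < 1 / (κ₁ * (1 - γ₁)) := one_div_pos.2 (mul_pos hκ₁ (by linarith))
      have : 0 < 1 / (κ₂ * (γ₂ - 1)) := one_div_pos.2 (mul_pos hκ₂ (by linarith))
      exact ⟨0, ⟨le_rfl, by linarith⟩, hx0⟩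
    · exact exists_zero_mem_Icc_of_pos hκ₁ hκ₂ hγ₁1 hγ₂ hode hx0
  exact ⟨⟨t, ht.1, hxt⟩, csInf_le_of_le ⟨0, fun _ hs ↦ hs.1⟩ ⟨ht.1, hxt⟩ ht.2⟩

theorem stmt_9 (κ₁ κ₂ γ₁ γ₂ : ℝ)
    (hκ₁ : 0 < κ₁) (hκ₂ : 0 < κ₂)
    (hγ₁0 : 0 < γ₁) (hγ₁1 : γ₁ < 1) (hγ₂ : 1 < γ₂)
    (x : ℝ → ℝ) (x₀ : ℝ) (hx0 : x 0 = x₀)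
    (hode : ∀ t, 0 ≤ t →
      HasDerivAt x (-κ₁ * spow (x t) γ₁ - κ₂ * spow (x t) γ₂) t) :
    (∃ t, 0 ≤ t ∧ x t = 0) ∧
    sInf {t : ℝ | 0 ≤ t ∧ x t = 0} ≤
      1 / (κ₁ * (1 - γ₁)) + 1 / (κ₂ * (γ₂ - 1)) :=
  stmt_9_general κ₁ κ₂ γ₁ γ₂ hκ₁ hκ₂ hγ₁1 hγ₂ x hode
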